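/- arXiv:1804.01510 — 5 statements merged into one kernel-verified Lean document; each statement's English description precedes it below -/
import Mathlib

section
/- Let q be a prime power and let b, c, d be natural numbers. The number of pairs of matrices (A, B) with A an b×c matrix over F_q and B a c×d matrix over F_q such that AB = 0 equals the sum over r from 0 to min(b,c) of (Q_r(b) · Q_r(c) / Q_r(r)) · q^(d(c-r)), where Q_i(j) = ∏_{k=0}^{i-1} (q^j - q^k). -/
/-!
Sort the pairs `(A, B)` by `A`: the `B` with `A * B = 0` are the `d`-tuples of vectors of `ker A`,
so there are `q ^ (d * (c - rank A))` of them. A map `F^c → F^b` of rank `r` is an `r`-dimensional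
subspace `E` of `F^b` (its range) together with a surjection `F^c → E ≅ F^r`, and surjections onto
`F^r` are matrices with `r` linearly independent rows, so there are `Q_r(c)` of them. For `c = r` the
maps of rank `r` are the injections `F^r → F^b`, i.e. the independent `r`-tuples of `F^b`; this
gives `#{E} * Q_r(r) = Q_r(b)`, hence `Q_r(b) Q_r(c) / Q_r(r)` maps of rank `r`.
-/

open Function LinearMap Module Submodule

theorem Nat.cast_prod_pow_sub_pow {R : Type*} [CommRing R] {q n r : ℕ} (hq : 0 < q) (hr : r ≤ n) :
    ((∏ i : Fin r, (q ^ n - q ^ (i : ℕ)) : ℕ) : R) =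
      ∏ k ∈ Finset.range r, ((q : R) ^ n - (q : R) ^ k) := by
  rw [Nat.cast_prod, Fin.prod_univ_eq_prod_range (fun k => ((q ^ n - q ^ k : ℕ) : R))]
  refine Finset.prod_congr rfl fun k hk => ?_
  rw [Nat.cast_sub (Nat.pow_le_pow_right hq ((Finset.mem_range.1 hk).le.trans hr)), Nat.cast_pow,
    Nat.cast_pow]

section Equivs

variable {R U V W : Type*} [Semiring R] [AddCommMonoid U] [Module R U] [AddCommMonoid V]
  [Module R V] [AddCommMonoid W] [Module R W]

def LinearMap.compEqZeroEquiv (f : V →ₗ[R] W) :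
    {g : U →ₗ[R] V // f ∘ₗ g = 0} ≃ (U →ₗ[R] ker f) where
  toFun g := g.1.codRestrict (ker f) fun u => by rw [mem_ker, ← comp_apply, g.2, zero_apply]
  invFun h := ⟨(ker f).subtype ∘ₗ h, by rw [← comp_assoc, comp_ker_subtype, zero_comp]⟩
  left_inv _ := rfl
  right_inv _ := rfl

def LinearMap.rangeEqEquivSurjective (E : Submodule R W) :
    {f : V →ₗ[R] W // range f = E} ≃ {g : V →ₗ[R] E // Surjective g} where
  toFun f := ⟨f.1.codRestrict E fun v => f.2.le (mem_range_self f.1 v), fun e => by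
    obtain ⟨v, hv⟩ := f.2.ge e.2
    exact ⟨v, Subtype.ext hv⟩⟩
  invFun g := ⟨E.subtype ∘ₗ g, by
    rw [range_comp_of_range_eq_top _ (range_eq_top.2 g.2), range_subtype]⟩
  left_inv _ := rfl
  right_inv _ := rfl

end Equivs

def LinearEquiv.surjectiveArrowCongr {R V W V' W' : Type*} [CommSemiring R] [AddCommMonoid V]
    [Module R V] [AddCommMonoid W] [Module R W] [AddCommMonoid V'] [Module R V'] [AddCommMonoid W']
    [Module R W'] (e₁ : V ≃ₗ[R] V') (e₂ : W ≃ₗ[R] W') :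
    {f : V →ₗ[R] W // Surjective f} ≃ {f : V' →ₗ[R] W' // Surjective f} :=
  (e₁.arrowCongr e₂).toEquiv.subtypeEquiv fun f => by
    change _ ↔ Surjective (e₂ ∘ f ∘ e₁.symm)
    rw [EquivLike.comp_surjective, EquivLike.surjective_comp]

theorem Matrix.surjective_mulVecLin_iff_linearIndependent_row {K m n : Type*} [Field K]
    [Fintype m] [Fintype n] (M : Matrix m n K) :
    Surjective M.mulVecLin ↔ LinearIndependent K M.row := by
  rw [← range_eq_top, eq_top_iff_finrank_eq, linearIndependent_iff_card_eq_finrank_span,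
    Set.finrank, ← rank_eq_finrank_span_row, finrank_fintype_fun_eq_card, eq_comm]
  rfl

section FiniteField

variable {K U V W : Type*} [Field K] [Fintype K] [AddCommGroup U] [Module K U] [AddCommGroup V]
  [Module K V] [AddCommGroup W] [Module K W]

local notation "q" => Fintype.card K

theorem LinearMap.card_comp_eq_zero [Finite U] [Finite V] (f : V →ₗ[K] W) :
    Nat.card {g : U →ₗ[K] V // f ∘ₗ g = 0} =
      q ^ (finrank K U * (finrank K V - finrank K (range f))) := by
  have : Finite (U →ₗ[K] ker f) := DFunLike.finite _
  have hker : finrank K (ker f) = finrank K V - finrank K (range f) := by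
    have := f.finrank_range_add_finrank_ker; omega
  rw [Nat.card_congr f.compEqZeroEquiv, natCard_eq_pow_finrank (K := K), Nat.card_eq_fintype_card,
    finrank_linearMap, hker]

theorem card_comp_eq_zero_eq_sum [Finite U] [Finite V] [Finite W] :
    Nat.card {p : (V →ₗ[K] W) × (U →ₗ[K] V) // p.1 ∘ₗ p.2 = 0} =
      ∑ r ∈ Finset.range (min (finrank K W) (finrank K V) + 1),
        Nat.card {f : V →ₗ[K] W // finrank K (range f) = r} *
          q ^ (finrank K U * (finrank K V - r)) := by
  classical
  have : Finite (U →ₗ[K] V) := DFunLike.finite _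
  have : Finite (V →ₗ[K] W) := DFunLike.finite _
  have := Fintype.ofFinite (V →ₗ[K] W)
  have rank_mem (f : V →ₗ[K] W) (_ : f ∈ Finset.univ) :
      finrank K (range f) ∈ Finset.range (min (finrank K W) (finrank K V) + 1) :=
    Finset.mem_range_succ_iff.2 (le_min (Submodule.finrank_le _) f.finrank_range_le)
  rw [Nat.card_congr (Equiv.subtypeProdEquivSigmaSubtype fun f g => f ∘ₗ g = 0), Nat.card_sigma]
  simp_rw [LinearMap.card_comp_eq_zero]
  rw [← Finset.sum_fiberwise_of_maps_to rank_mem]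
  refine Finset.sum_congr rfl fun r _ => ?_
  rw [Finset.sum_congr rfl fun f hf => by rw [(Finset.mem_filter.1 hf).2], Finset.sum_const,
    smul_eq_mul, Nat.card_eq_fintype_card, Fintype.card_subtype]

theorem card_surjective_linearMap_pi [Finite V] {r : ℕ} (hr : r ≤ finrank K V) :
    Nat.card {g : V →ₗ[K] (Fin r → K) // Surjective g} =
      ∏ i : Fin r, (q ^ finrank K V - q ^ (i : ℕ)) := by
  classical
  let toRows : {g : (Fin (finrank K V) → K) →ₗ[K] (Fin r → K) // Surjective g} ≃
      {s : Fin r → Fin (finrank K V) → K // LinearIndependent K s} :=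
    (LinearMap.toMatrix'.toEquiv.trans Matrix.of.symm).subtypeEquiv fun g => by
      have := (toMatrix' g).surjective_mulVecLin_iff_linearIndependent_row
      rwa [← Matrix.toLin'_apply', Matrix.toLin'_toMatrix'] at this
  rw [Nat.card_congr (((finBasis K V).equivFun.surjectiveArrowCongr (.refl K _)).trans toRows),
    card_linearIndependent (by simpa using hr), finrank_fin_fun]

theorem card_finrank_range_eq [Finite V] [Finite W] {r : ℕ} (hr : r ≤ finrank K V) :
    Nat.card {f : V →ₗ[K] W // finrank K (range f) = r} =
      Nat.card {E : Submodule K W // finrank K E = r} *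
        ∏ i : Fin r, (q ^ finrank K V - q ^ (i : ℕ)) := by
  have := Fintype.ofFinite {E : Submodule K W // finrank K E = r}
  have : Finite (V →ₗ[K] W) := DFunLike.finite _
  have card_fiber (E : {E : Submodule K W // finrank K E = r}) :
      Nat.card {f : V →ₗ[K] W // range f = E} = ∏ i : Fin r, (q ^ finrank K V - q ^ (i : ℕ)) := by
    have eE : E.1 ≃ₗ[K] (Fin r → K) := LinearEquiv.ofFinrankEq _ _ (by simp [E.2])
    rw [Nat.card_congr ((rangeEqEquivSurjective E.1).trans
      ((LinearEquiv.refl K V).surjectiveArrowCongr eE)), card_surjective_linearMap_pi hr]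
  rw [← Nat.card_congr (@Equiv.sigmaSubtypeFiberEquivSubtype _ _ (fun f : V →ₗ[K] W => range f)
    (fun f => finrank K (range f) = r) (fun E => finrank K E = r) fun _ => .rfl), Nat.card_sigma]
  simp [card_fiber, Nat.card_eq_fintype_card]

theorem finrank_range_piRing_symm_eq_iff {r : ℕ} (s : Fin r → W) :
    finrank K (range ((LinearEquiv.piRing K W (Fin r) K).symm s)) = r ↔ LinearIndependent K s := by
  have : (LinearEquiv.piRing K W (Fin r) K).symm s = Fintype.linearCombination K s := by
    ext; simp [LinearEquiv.piRing_symm_apply, Fintype.linearCombination_apply]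
  rw [this, Fintype.range_linearCombination, linearIndependent_iff_card_eq_finrank_span,
    Fintype.card_fin, Set.finrank, eq_comm]

theorem card_submodule_finrank_eq_mul [Finite W] {r : ℕ} (hr : r ≤ finrank K W) :
    Nat.card {E : Submodule K W // finrank K E = r} * ∏ i : Fin r, (q ^ r - q ^ (i : ℕ)) =
      ∏ i : Fin r, (q ^ finrank K W - q ^ (i : ℕ)) := by
  have h := card_finrank_range_eq (W := W) (finrank_fin_fun K (n := r)).ge
  rw [finrank_fin_fun] at h
  rw [← h, ← card_linearIndependent hr]
  exact Nat.card_congr ((LinearEquiv.piRing K W (Fin r) K).symm.toEquiv.subtypeEquiv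
    fun s => (finrank_range_piRing_symm_eq_iff s).symm).symm

theorem card_finrank_range_eq_mul [Finite V] [Finite W] {r : ℕ} (hrV : r ≤ finrank K V)
    (hrW : r ≤ finrank K W) :
    Nat.card {f : V →ₗ[K] W // finrank K (range f) = r} * ∏ i : Fin r, (q ^ r - q ^ (i : ℕ)) =
      (∏ i : Fin r, (q ^ finrank K W - q ^ (i : ℕ))) *
        ∏ i : Fin r, (q ^ finrank K V - q ^ (i : ℕ)) := by
  rw [card_finrank_range_eq hrV, mul_right_comm, card_submodule_finrank_eq_mul hrW]

theorem card_finrank_range_eq_div [Finite V] [Finite W] {r : ℕ} (hrV : r ≤ finrank K V)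
    (hrW : r ≤ finrank K W) :
    (Nat.card {f : V →ₗ[K] W // finrank K (range f) = r} : ℚ) =
      (∏ k ∈ Finset.range r, ((q : ℚ) ^ finrank K W - (q : ℚ) ^ k)) *
        (∏ k ∈ Finset.range r, ((q : ℚ) ^ finrank K V - (q : ℚ) ^ k)) /
        ∏ k ∈ Finset.range r, ((q : ℚ) ^ r - (q : ℚ) ^ k) := by
  have hq : 0 < q := Fintype.card_pos
  have card_GL : ∏ k ∈ Finset.range r, ((q : ℚ) ^ r - (q : ℚ) ^ k) = Nat.card (GL (Fin r) K) := by
    rw [Matrix.card_GL_field, Nat.cast_prod_pow_sub_pow hq le_rfl]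
  rw [eq_div_iff (card_GL ▸ Nat.cast_ne_zero.2 Nat.card_pos.ne'),
    ← Nat.cast_prod_pow_sub_pow hq hrW, ← Nat.cast_prod_pow_sub_pow hq hrV,
    ← Nat.cast_prod_pow_sub_pow hq le_rfl, ← Nat.cast_mul, ← Nat.cast_mul,
    card_finrank_range_eq_mul hrV hrW]

end FiniteField

theorem stmt_0_general (q b c d : ℕ)
    (F : Type) [Field F] [Fintype F] (hF : Fintype.card F = q) :
    (Nat.card {p : Matrix (Fin b) (Fin c) F × Matrix (Fin c) (Fin d) F // p.1 * p.2 = 0} : ℚ) =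
      ∑ r ∈ Finset.range (min b c + 1),
        ((∏ k ∈ Finset.range r, ((q : ℚ) ^ b - (q : ℚ) ^ k)) *
            (∏ k ∈ Finset.range r, ((q : ℚ) ^ c - (q : ℚ) ^ k)) /
            (∏ k ∈ Finset.range r, ((q : ℚ) ^ r - (q : ℚ) ^ k))) *
          (q : ℚ) ^ (d * (c - r)) := by
  subst hF
  let toLinPairs :
      {p : Matrix (Fin b) (Fin c) F × Matrix (Fin c) (Fin d) F // p.1 * p.2 = 0} ≃
        {p : ((Fin c → F) →ₗ[F] (Fin b → F)) × ((Fin d → F) →ₗ[F] (Fin c → F)) //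
          p.1 ∘ₗ p.2 = 0} :=
    (Matrix.toLin'.toEquiv.prodCongr Matrix.toLin'.toEquiv).subtypeEquiv fun p => by
      simp [← Matrix.toLin'_mul]
  rw [Nat.card_congr toLinPairs, card_comp_eq_zero_eq_sum]
  simp only [finrank_fin_fun, Nat.cast_sum, Nat.cast_mul, Nat.cast_pow]
  refine Finset.sum_congr rfl fun r hr => ?_
  obtain ⟨hrb, hrc⟩ := le_min_iff.1 (Finset.mem_range_succ_iff.1 hr)
  rw [card_finrank_range_eq_div (by rwa [finrank_fin_fun]) (by rwa [finrank_fin_fun]),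
    finrank_fin_fun, finrank_fin_fun]

/-- The number of pairs of matrices (A,B) over F_q with AB = 0 equals
    ∑_{r=0}^{min(b,c)} (Q_r(b)·Q_r(c)/Q_r(r))·q^(d(c-r)). -/
theorem stmt_0 (q b c d : ℕ) (hq : IsPrimePow q)
    (F : Type) [Field F] [Fintype F] (hF : Fintype.card F = q) :
    (Nat.card {p : Matrix (Fin b) (Fin c) F × Matrix (Fin c) (Fin d) F // p.1 * p.2 = 0} : ℚ) =
      ∑ r ∈ Finset.range (min b c + 1),
        ((∏ k ∈ Finset.range r, ((q : ℚ) ^ b - (q : ℚ) ^ k)) *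
            (∏ k ∈ Finset.range r, ((q : ℚ) ^ c - (q : ℚ) ^ k)) /
            (∏ k ∈ Finset.range r, ((q : ℚ) ^ r - (q : ℚ) ^ k))) *
          (q : ℚ) ^ (d * (c - r)) :=
  stmt_0_general q b c d F hF
end

section
/- There exists an absolute constant c₀ > 0 such that for every prime power q and all natural numbers b, c, d, the number ψ(b,c,d) of pairs (A,B) of a b×c matrix A and a c×d matrix B over F_q satisfying AB = 0 is at most c₀ · q^((b+c-d)²/4 + cd). -/
/-!
Sorting the pairs `(A, B)` by the rank `r` of `A`: the `B` with `AB = 0` are the `d`-tuples of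
vectors of `ker A`, so `ψ(b,c,d) = ∑_r N_r q^((c-r)d)`, where `N_r` counts the `b × c` matrices of
rank `r`. A rank-`r` matrix is determined by its column space and its columns, and an
`r`-dimensional subspace with an ordered basis by the basis; as `|GL_r(F_q)| ≥ q^(r²)/4`, this
gives `N_r ≤ 4 q^(r(b+c) - r²)`. Completing the square,
`r(b+c) - r² + (c-r)d = (b+c-d)²/4 + cd - (r - (b+c-d)/2)²`, and the Gaussian sum
`∑_r 2^(-(r-t)²)` over integers `r` is at most `4` for every real `t`; hence `c₀ = 16` works.
-/

open Finset Module

lemma sum_half_pow_le_two_of_injOn {ι : Type*} (s : Finset ι) (f : ι → ℕ)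
    (hf : Set.InjOn f s) : ∑ i ∈ s, (1 / 2 : ℝ) ^ f i ≤ 2 := by
  rw [← sum_image hf]
  calc ∑ k ∈ s.image f, (1 / 2 : ℝ) ^ k
      ≤ ∑ k ∈ range ((s.image f).sup id + 1), (1 / 2 : ℝ) ^ k :=
        sum_le_sum_of_subset_of_nonneg
          (fun k hk => mem_range.2 (Nat.lt_succ_of_le (le_sup (f := id) hk)))
          (fun _ _ _ => by positivity)
    _ ≤ 2 := sum_geometric_two_le _

lemma two_rpow_neg_sq_le_half_pow_floor {x : ℝ} (hx : 0 ≤ x) :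
    (2 : ℝ) ^ (-(x ^ 2)) ≤ (1 / 2) ^ ⌊x⌋₊ := by
  have hfloor : (⌊x⌋₊ : ℝ) ≤ x ^ 2 := by
    rcases lt_or_ge x 1 with hx1 | hx1
    · simp [Nat.floor_eq_zero.2 hx1, sq_nonneg]
    · nlinarith [Nat.floor_le hx]
  rw [one_div, inv_pow, ← Real.rpow_natCast 2 ⌊x⌋₊, ← Real.rpow_neg zero_le_two]
  exact Real.rpow_le_rpow_of_exponent_le one_le_two (neg_le_neg hfloor)

lemma sum_two_rpow_neg_sq_le_two (s : Finset ℤ) (t : ℝ) (hs : ∀ r ∈ s, t ≤ r) :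
    ∑ r ∈ s, (2 : ℝ) ^ (-(((r : ℝ) - t) ^ 2)) ≤ 2 := by
  have hfloor : ∀ r ∈ s, ((⌊(r : ℝ) - t⌋₊ : ℕ) : ℤ) = r + ⌊-t⌋ := fun r hr => by
    rw [Int.natCast_floor_eq_floor (sub_nonneg.2 (hs r hr)), sub_eq_add_neg,
      Int.floor_intCast_add]
  refine (sum_le_sum fun r hr =>
    two_rpow_neg_sq_le_half_pow_floor (sub_nonneg.2 (hs r hr))).trans
    (sum_half_pow_le_two_of_injOn s _ fun r hr r' hr' h => ?_)
  have hr_floor := hfloor r hr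
  have hr'_floor := hfloor r' hr'
  have h_floor_eq : ⌊(r : ℝ) - t⌋₊ = ⌊(r' : ℝ) - t⌋₊ := h
  omega

lemma sum_two_rpow_neg_sq_le_four (s : Finset ℤ) (t : ℝ) :
    ∑ r ∈ s, (2 : ℝ) ^ (-(((r : ℝ) - t) ^ 2)) ≤ 4 := by
  set below := s.filter fun r : ℤ => ¬ t ≤ r
  have hbelow : ∑ r ∈ below, (2 : ℝ) ^ (-(((r : ℝ) - t) ^ 2)) =
      ∑ r ∈ below.image Neg.neg, (2 : ℝ) ^ (-(((r : ℝ) - -t) ^ 2)) := by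
    rw [sum_image neg_injective.injOn]
    refine sum_congr rfl fun r _ => ?_
    push_cast
    ring_nf
  have hbelow_le := sum_two_rpow_neg_sq_le_two (below.image Neg.neg) (-t) fun _ hr => by
    obtain ⟨r, hr_below, rfl⟩ := mem_image.1 hr
    have := (mem_filter.1 hr_below).2
    push_cast
    linarith
  have habove_le := sum_two_rpow_neg_sq_le_two (s.filter fun r : ℤ => t ≤ r) t
    fun r hr => (mem_filter.1 hr).2
  rw [← sum_filter_add_sum_filter_not s (fun r : ℤ => t ≤ r), hbelow]
  linarith

lemma quarter_add_half_pow_le_prod_one_sub_half_pow (r : ℕ) :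
    1 / 4 + (1 / 2 : ℝ) ^ (r + 1) ≤ ∏ j ∈ range r, (1 - (1 / 2 : ℝ) ^ (j + 1)) := by
  induction r with
  | zero => norm_num
  | succ r ih =>
    rcases Nat.eq_zero_or_pos r with rfl | hr
    · norm_num
    -- for `r ≥ 1` the new factor is `1 - x` with `x ≤ 1/4`, which halves the excess over `1/4`
    have hx : (1 / 2 : ℝ) ^ (r + 1) ≤ 1 / 4 := by
      calc (1 / 2 : ℝ) ^ (r + 1) ≤ (1 / 2) ^ 2 :=
            pow_le_pow_of_le_one (by norm_num) (by norm_num) (by omega)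
        _ = 1 / 4 := by norm_num
    rw [prod_range_succ, pow_succ _ (r + 1)]
    nlinarith [pow_pos (by norm_num : (0 : ℝ) < 1 / 2) (r + 1)]

lemma pow_mul_self_le_four_mul_prod_pow_sub_pow {q : ℝ} (hq : 2 ≤ q) (r : ℕ) :
    q ^ (r * r) ≤ 4 * ∏ i ∈ range r, (q ^ r - q ^ i) := by
  have hfactor : ∀ i ∈ range r, q ^ r * (1 - (1 / 2) ^ (r - i)) ≤ q ^ r - q ^ i := by
    intro i hi
    have hq_inv : (1 / q) ^ (r - i) ≤ (1 / 2) ^ (r - i) := by gcongr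
    calc q ^ r * (1 - (1 / 2) ^ (r - i)) ≤ q ^ r * (1 - (1 / q) ^ (r - i)) := by gcongr
      _ = q ^ r - q ^ i := by
        rw [mul_sub, mul_one, ← pow_mul_pow_sub q (mem_range.1 hi).le, mul_assoc, ← mul_pow,
          mul_one_div_cancel (by positivity), one_pow, mul_one]
  have hreflect : ∏ i ∈ range r, (1 - (1 / 2 : ℝ) ^ (r - i)) =
      ∏ j ∈ range r, (1 - (1 / 2 : ℝ) ^ (j + 1)) := by
    rw [← prod_range_reflect]
    refine prod_congr rfl fun j hj => ?_
    rw [show r - (r - 1 - j) = j + 1 by have := mem_range.1 hj; omega]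
  have hquarter : 1 ≤ 4 * ∏ j ∈ range r, (1 - (1 / 2 : ℝ) ^ (j + 1)) := by
    linarith [quarter_add_half_pow_le_prod_one_sub_half_pow r,
      pow_pos (by norm_num : (0 : ℝ) < 1 / 2) (r + 1)]
  calc q ^ (r * r) ≤ q ^ (r * r) * (4 * ∏ j ∈ range r, (1 - (1 / 2 : ℝ) ^ (j + 1))) :=
        le_mul_of_one_le_right (by positivity) hquarter
    _ = 4 * ∏ i ∈ range r, q ^ r * (1 - (1 / 2) ^ (r - i)) := by
        rw [prod_mul_distrib, prod_const, card_range, ← pow_mul, hreflect]; ring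
    _ ≤ 4 * ∏ i ∈ range r, (q ^ r - q ^ i) :=
        mul_le_mul_of_nonneg_left (prod_le_prod (fun _ _ => mul_nonneg (by positivity)
          (sub_nonneg.2 (pow_le_one₀ (by norm_num) (by norm_num)))) hfactor) zero_le_four

section Counting

variable {K : Type*} [Field K] [Fintype K]

lemma card_finrank_eq_mul_prod_le {V : Type*} [AddCommGroup V] [Module K V] [Finite V] (r : ℕ) :
    Nat.card {W : Submodule K V // finrank K W = r} *
        ∏ i : Fin r, (Fintype.card K ^ r - Fintype.card K ^ (i : ℕ)) ≤ Nat.card V ^ r := by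
  have : Fintype {W : Submodule K V // finrank K W = r} := Fintype.ofFinite _
  let toTuple : (Σ W : {W : Submodule K V // finrank K W = r},
      {s : Fin r → W.1 // LinearIndependent K s}) → (Fin r → V) :=
    fun x i => x.2.1 i
  have hspan : ∀ x, Submodule.span K (Set.range (toTuple x)) = x.1.1 := by
    rintro ⟨⟨W, hW⟩, s, hs⟩
    have hs' : LinearIndependent K (toTuple ⟨⟨W, hW⟩, s, hs⟩) := hs.map' W.subtype W.ker_subtype
    refine Submodule.eq_of_le_of_finrank_eq ?_ ?_
    · rw [Submodule.span_le]
      rintro _ ⟨i, rfl⟩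
      exact (s i).2
    · rw [finrank_span_eq_card hs', Fintype.card_fin, hW]
  have hinj : Function.Injective toTuple := by
    rintro ⟨W, s, hs⟩ ⟨W', s', hs'⟩ h
    obtain rfl : W = W' := Subtype.ext (by
      rw [← hspan ⟨W, s, hs⟩, ← hspan ⟨W', s', hs'⟩, h])
    obtain rfl : s = s' := funext fun i => Subtype.ext (congrFun h i)
    rfl
  calc _ = Nat.card (Σ W : {W : Submodule K V // finrank K W = r},
        {s : Fin r → W.1 // LinearIndependent K s}) := by
        rw [Nat.card_sigma, Nat.card_eq_fintype_card, ← smul_eq_mul, ← card_univ, ← sum_const]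
        refine sum_congr rfl fun W _ => ?_
        rw [card_linearIndependent W.2.ge, W.2]
    _ ≤ Nat.card (Fin r → V) := Nat.card_le_card_of_injective _ hinj
    _ = Nat.card V ^ r := by
        rw [Nat.card_fun, Nat.card_eq_fintype_card (α := Fin r), Fintype.card_fin]

variable {m n : Type*} [Fintype n]

lemma card_rank_eq_le [Fintype m] (r : ℕ) :
    Nat.card {A : Matrix m n K // A.rank = r} ≤
      Nat.card {W : Submodule K (m → K) // finrank K W = r} *
        Fintype.card K ^ (r * Fintype.card n) := by
  classical
  have : Fintype {W : Submodule K (m → K) // finrank K W = r} := Fintype.ofFinite _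
  let toColumns : {A : Matrix m n K // A.rank = r} →
      Σ W : {W : Submodule K (m → K) // finrank K W = r}, (n → W.1) :=
    fun A => ⟨⟨LinearMap.range A.1.mulVecLin, A.2⟩,
      fun j => ⟨A.1.col j, Matrix.mulVec_single_one A.1 j ▸ LinearMap.mem_range_self _ _⟩⟩
  have hinj : Function.Injective toColumns := by
    intro A A' h
    have hcol := congrArg (fun x => fun j => (x.2 j : m → K)) h
    exact Subtype.ext (Matrix.ext fun i j => congrFun (congrFun hcol j) i)
  calc _ ≤ Nat.card (Σ W : {W : Submodule K (m → K) // finrank K W = r}, (n → W.1)) :=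
        Nat.card_le_card_of_injective _ hinj
    _ = _ := by
        rw [Nat.card_sigma, Nat.card_eq_fintype_card, ← smul_eq_mul, ← card_univ, ← sum_const]
        refine sum_congr rfl fun W _ => ?_
        rw [Nat.card_fun, natCard_eq_pow_finrank (K := K), W.2, Nat.card_eq_fintype_card,
          Nat.card_eq_fintype_card, ← pow_mul]

lemma card_rank_eq_mul_pow_le [Fintype m] (r : ℕ) :
    (Nat.card {A : Matrix m n K // A.rank = r} : ℝ) * (Fintype.card K : ℝ) ^ (r * r) ≤
      4 * (Fintype.card K : ℝ) ^ (r * (Fintype.card m + Fintype.card n)) := by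
  set q := Fintype.card K
  have hq : 1 ≤ q := Fintype.card_pos
  set P := ∏ i : Fin r, (q ^ r - q ^ (i : ℕ))
  have hcount : Nat.card {A : Matrix m n K // A.rank = r} * P ≤
      q ^ (r * (Fintype.card m + Fintype.card n)) :=
    calc _ ≤ Nat.card {W : Submodule K (m → K) // finrank K W = r} * q ^ (r * Fintype.card n) * P :=
          Nat.mul_le_mul_right _ (card_rank_eq_le r)
      _ = Nat.card {W : Submodule K (m → K) // finrank K W = r} * P * q ^ (r * Fintype.card n) :=
          by ring
      _ ≤ Nat.card (m → K) ^ r * q ^ (r * Fintype.card n) :=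
          Nat.mul_le_mul_right _ (card_finrank_eq_mul_prod_le r)
      _ = _ := by
          rw [Nat.card_fun, Nat.card_eq_fintype_card (α := K), Nat.card_eq_fintype_card (α := m),
            ← pow_mul, ← pow_add, mul_comm (Fintype.card m), mul_add]
  have hP : (P : ℝ) = ∏ i ∈ range r, ((q : ℝ) ^ r - (q : ℝ) ^ i) := by
    rw [Nat.cast_prod, Fin.prod_univ_eq_prod_range (fun i => ((q ^ r - q ^ i : ℕ) : ℝ))]
    refine prod_congr rfl fun i hi => ?_
    rw [Nat.cast_sub (Nat.pow_le_pow_right hq (mem_range.1 hi).le)]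
    push_cast
    rfl
  have hq2 : (2 : ℝ) ≤ q := by exact_mod_cast Fintype.one_lt_card
  calc _ ≤ (Nat.card {A : Matrix m n K // A.rank = r} : ℝ) * (4 * P) := by
        rw [hP]
        gcongr
        exact pow_mul_self_le_four_mul_prod_pow_sub_pow hq2 r
    _ ≤ _ := by
        rw [mul_left_comm]
        gcongr
        exact_mod_cast hcount

lemma card_mul_eq_zero (A : Matrix m n K) (p : Type*) [Fintype p] :
    Nat.card {B : Matrix n p K // A * B = 0} =
      Fintype.card K ^ ((Fintype.card n - A.rank) * Fintype.card p) := by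
  have hcols : {B : Matrix n p K // A * B = 0} ≃ (p → LinearMap.ker A.mulVecLin) :=
    ((Matrix.transposeLinearEquiv n p K K).toEquiv.subtypeEquiv fun B => by
      simp only [LinearEquiv.coe_toEquiv, Matrix.transposeLinearEquiv_apply, LinearMap.mem_ker,
        Matrix.mulVecLin_apply, ← Matrix.ext_iff, funext_iff, Matrix.mulVec, Matrix.mul_apply,
        dotProduct, Matrix.zero_apply, Pi.zero_apply]
      exact forall_comm).trans Equiv.subtypePiEquivPi
  have hker : finrank K (LinearMap.ker A.mulVecLin) = Fintype.card n - A.rank := by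
    have := LinearMap.finrank_range_add_finrank_ker A.mulVecLin
    rw [finrank_fintype_fun_eq_card] at this
    rw [Matrix.rank]
    omega
  rw [Nat.card_congr hcols, Nat.card_fun, natCard_eq_pow_finrank (K := K), hker,
    Nat.card_eq_fintype_card, Nat.card_eq_fintype_card, ← pow_mul]

lemma card_pairs_mul_eq_zero [Fintype m] (p : Type*) [Fintype p] :
    Nat.card {AB : Matrix m n K × Matrix n p K // AB.1 * AB.2 = 0} =
      ∑ r ∈ range (Fintype.card n + 1), Nat.card {A : Matrix m n K // A.rank = r} *
        Fintype.card K ^ ((Fintype.card n - r) * Fintype.card p) := by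
  classical
  have hrank : ∀ A ∈ (univ : Finset (Matrix m n K)), A.rank ∈ range (Fintype.card n + 1) :=
    fun A _ => mem_range_succ_iff.2 A.rank_le_card_width
  rw [Nat.card_congr (Equiv.subtypeProdEquivSigmaSubtype fun A B => A * B = 0), Nat.card_sigma]
  simp_rw [card_mul_eq_zero]
  rw [← sum_fiberwise_of_maps_to hrank]
  refine sum_congr rfl fun r _ => ?_
  rw [sum_congr rfl fun A hA => by rw [(mem_filter.1 hA).2], sum_const, smul_eq_mul,
    Nat.card_eq_fintype_card, Fintype.card_subtype]

end Counting

lemma mul_pow_le_rpow_mul_two_rpow_neg_sq {q N : ℝ} (hq : 2 ≤ q) {b c d r : ℕ} (hr : r ≤ c)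
    (hN : N * q ^ (r * r) ≤ 4 * q ^ (r * (b + c))) :
    N * q ^ ((c - r) * d) ≤
      4 * q ^ (((b : ℝ) + c - d) ^ 2 / 4 + c * d) * 2 ^ (-((r - ((b : ℝ) + c - d) / 2) ^ 2)) := by
  have hq0 : 0 < q := by linarith
  have hN' : N ≤ 4 * q ^ (r * (b + c)) / q ^ (r * r) := by
    rwa [le_div_iff₀ (by positivity)]
  calc N * q ^ ((c - r) * d) ≤ 4 * q ^ (r * (b + c)) / q ^ (r * r) * q ^ ((c - r) * d) := by
        gcongr
    _ = 4 * q ^ ((((r * (b + c) : ℕ) : ℝ) - (r * r : ℕ)) + ((c - r) * d : ℕ)) := by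
        rw [Real.rpow_add hq0, Real.rpow_sub hq0]
        simp only [Real.rpow_natCast]
        ring
    _ = 4 * q ^ (((b : ℝ) + c - d) ^ 2 / 4 + c * d) * q ^ (-((r - ((b : ℝ) + c - d) / 2) ^ 2)) := by
        rw [mul_assoc, ← Real.rpow_add hq0]
        congr 2
        push_cast [Nat.cast_sub hr]
        ring
    _ ≤ 4 * q ^ (((b : ℝ) + c - d) ^ 2 / 4 + c * d) * 2 ^ (-((r - ((b : ℝ) + c - d) / 2) ^ 2)) :=
        mul_le_mul_of_nonneg_left
          (Real.rpow_le_rpow_of_nonpos two_pos hq (neg_nonpos.2 (sq_nonneg _))) (by positivity)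

/-- There is an absolute constant c₀ > 0 with
    ψ(b,c,d) ≤ c₀ · q^((b+c-d)²/4 + cd) for all prime powers q. -/
theorem stmt_2 :
    ∃ c₀ : ℝ, 0 < c₀ ∧
      ∀ (q b c d : ℕ), IsPrimePow q →
        ∀ (F : Type) [Field F] [Fintype F], Fintype.card F = q →
          (Nat.card {p : Matrix (Fin b) (Fin c) F × Matrix (Fin c) (Fin d) F //
              p.1 * p.2 = 0} : ℝ) ≤
            c₀ * (q : ℝ) ^ ((((b : ℝ) + c - d) ^ 2) / 4 + (c : ℝ) * d) := by
  refine ⟨16, by norm_num, fun q b c d _ F _ _ hF => ?_⟩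
  subst hF
  have hq : (2 : ℝ) ≤ Fintype.card F := by exact_mod_cast Fintype.one_lt_card
  set E : ℝ := ((b : ℝ) + c - d) ^ 2 / 4 + c * d
  set t : ℝ := ((b : ℝ) + c - d) / 2
  have hpairs := card_pairs_mul_eq_zero (K := F) (m := Fin b) (n := Fin c) (Fin d)
  simp only [Fintype.card_fin] at hpairs
  rw [hpairs]
  push_cast
  calc _ ≤ ∑ r ∈ range (c + 1), 4 * (Fintype.card F : ℝ) ^ E * 2 ^ (-((r - t) ^ 2)) :=
        sum_le_sum fun r hr => mul_pow_le_rpow_mul_two_rpow_neg_sq hq (mem_range_succ_iff.1 hr)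
          (by simpa using card_rank_eq_mul_pow_le (K := F) (m := Fin b) (n := Fin c) r)
    _ = 4 * (Fintype.card F : ℝ) ^ E * ∑ r ∈ (range (c + 1)).map (Nat.castEmbedding : ℕ ↪ ℤ),
          (2 : ℝ) ^ (-(((r : ℝ) - t) ^ 2)) := by
        rw [mul_sum, sum_map]
        simp
    _ ≤ 4 * (Fintype.card F : ℝ) ^ E * 4 := by
        gcongr
        exact sum_two_rpow_neg_sq_le_four _ t
    _ = 16 * (Fintype.card F : ℝ) ^ E := by ring
end

section
/- Let G be a finite group acting transitively on a finite set Ω, let K ≤ G be a subgroup, and let ω ∈ Ω with stabilizer R = G_ω. Then |{K^t : t ∈ G, K^t ≤ R}| / |K^G| = fix(K,Ω)/|Ω|, where fix(K,Ω) is the number of points of Ω fixed by every element of K and K^G is the set of G-conjugates of K. -/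
/-!
The fibres of an orbit map `g ↦ g • x` are the cosets of the stabilizer of `x`, so the proportion
of points of the orbit lying in a set `s` equals the proportion of group elements that move `x`
into `s`. For the conjugation action on subgroups (base point `K`, `s` the subgroups below `R`)
and for the transitive action on `Ω` (base point `ω`, `s` the points fixed by `K`) the two sets of
group elements correspond under `t ↦ t⁻¹`, because `tKt⁻¹ ≤ G_ω ↔ K ≤ G_{t⁻¹ω}`.
-/

open MulAction Pointwise

namespace MulAction

variable {G X : Type*} [Group G] [MulAction G X]

theorem card_orbit_inter_mul_card_stabilizer (x : X) (s : Set X) :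
    Nat.card ↥(orbit G x ∩ s) * Nat.card (stabilizer G x) =
      Nat.card ((· • x) ⁻¹' s : Set G) := by
  let e := (orbitEquivQuotientStabilizer G x).symm
  let P : Set (G ⧸ stabilizer G x) := e ⁻¹' {y | ↑y ∈ s}
  have hP : P ≃ ↥(orbit G x ∩ s) :=
    (e.subtypeEquiv fun _ => Iff.rfl).trans
      (Equiv.subtypeSubtypeEquivSubtypeInter (· ∈ orbit G x) (· ∈ s))
  have hpre : ((· • x) ⁻¹' s : Set G) = QuotientGroup.mk ⁻¹' P := rfl
  rw [hpre, Nat.card_congr (QuotientGroup.preimageMkEquivSubgroupProdSet _ P), Nat.card_prod,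
    Nat.card_congr hP, mul_comm]

theorem card_orbit_inter_div_card_orbit [Finite G] (x : X) (s : Set X) :
    (Nat.card ↥(orbit G x ∩ s) : ℚ) / Nat.card (orbit G x) =
      Nat.card ((· • x) ⁻¹' s : Set G) / Nat.card G := by
  have hG := card_orbit_inter_mul_card_stabilizer (G := G) x Set.univ
  rw [Set.inter_univ, Set.preimage_univ, Nat.card_univ] at hG
  have hstab : (Nat.card (stabilizer G x) : ℚ) ≠ 0 := by exact_mod_cast Nat.card_pos.ne'
  rw [← card_orbit_inter_mul_card_stabilizer, ← hG, Nat.cast_mul, Nat.cast_mul,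
    mul_div_mul_right _ _ hstab]

end MulAction

namespace Subgroup

variable {G : Type*} [Group G]

theorem setOf_eq_map_conj_eq_orbit (K : Subgroup G) :
    {H : Subgroup G | ∃ t : G, H = K.map (MulAut.conj t).toMonoidHom} = orbit (ConjAct G) K := by
  ext H
  exact ⟨fun ⟨t, ht⟩ => ⟨ConjAct.toConjAct t, ht.symm⟩,
    fun ⟨g, hg⟩ => ⟨ConjAct.ofConjAct g, hg.symm⟩⟩

theorem conjAct_smul_le_stabilizer_iff {X : Type*} [MulAction G X] (K : Subgroup G) (g : G)
    (x : X) : ConjAct.toConjAct g • K ≤ stabilizer G x ↔ K ≤ stabilizer G (g⁻¹ • x) := by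
  have h : stabilizer G (g⁻¹ • x) = (ConjAct.toConjAct g)⁻¹ • stabilizer G x :=
    stabilizer_smul_eq_stabilizer_map_conj g⁻¹ x
  rw [h, ← pointwise_smul_le_pointwise_smul_iff (a := ConjAct.toConjAct g) (S := K),
    smul_inv_smul]

theorem card_conjAct_smul_le_stabilizer {X : Type*} [MulAction G X] (K : Subgroup G) (x : X) :
    Nat.card ((· • K) ⁻¹' {H | H ≤ stabilizer G x} : Set (ConjAct G)) =
      Nat.card ((· • x) ⁻¹' {y | K ≤ stabilizer G y} : Set G) := by
  refine (Nat.card_congr ((Equiv.inv G).trans ConjAct.toConjAct.toEquiv |>.subtypeEquiv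
    fun t => ?_)).symm
  change K ≤ stabilizer G (t • x) ↔ ConjAct.toConjAct t⁻¹ • K ≤ stabilizer G x
  rw [conjAct_smul_le_stabilizer_iff, inv_inv]

end Subgroup

theorem stmt_10_general (G : Type) [Group G] [Fintype G] (Ω : Type)
    [MulAction G Ω] [MulAction.IsPretransitive G Ω] (K : Subgroup G) (ω : Ω) :
    (Nat.card {H : Subgroup G |
        (∃ t : G, H = K.map (MulAut.conj t).toMonoidHom) ∧ H ≤ MulAction.stabilizer G ω} : ℚ) /
        Nat.card {H : Subgroup G | ∃ t : G, H = K.map (MulAut.conj t).toMonoidHom} =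
      (Nat.card {w : Ω // ∀ k ∈ K, k • w = w} : ℚ) / Nat.card Ω := by
  have hconj := K.setOf_eq_map_conj_eq_orbit
  have hconjR : {H : Subgroup G | (∃ t : G, H = K.map (MulAut.conj t).toMonoidHom) ∧
      H ≤ stabilizer G ω} = orbit (ConjAct G) K ∩ {H | H ≤ stabilizer G ω} := by
    rw [← hconj]
    rfl
  have hfix : Nat.card {w : Ω // ∀ k ∈ K, k • w = w} =
      Nat.card ↥(orbit G ω ∩ {w | K ≤ stabilizer G w}) := by
    rw [orbit_eq_univ, Set.univ_inter]
    rfl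
  have hcard : Nat.card Ω = Nat.card (orbit G ω) := by
    rw [orbit_eq_univ, Nat.card_univ]
  rw [hconjR, hconj, hfix, hcard, card_orbit_inter_div_card_orbit, card_orbit_inter_div_card_orbit,
    K.card_conjAct_smul_le_stabilizer, Nat.card_congr ConjAct.ofConjAct.toEquiv]

/-- |{K^t : t ∈ G, K^t ≤ R}| / |K^G| = fix(K,Ω)/|Ω| for a point stabilizer R. -/
theorem stmt_10 (G : Type) [Group G] [Fintype G] (Ω : Type) [Fintype Ω] [Nonempty Ω]
    [MulAction G Ω] [MulAction.IsPretransitive G Ω] (K : Subgroup G) (ω : Ω) :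
    (Nat.card {H : Subgroup G |
        (∃ t : G, H = K.map (MulAut.conj t).toMonoidHom) ∧ H ≤ MulAction.stabilizer G ω} : ℚ) /
        Nat.card {H : Subgroup G | ∃ t : G, H = K.map (MulAut.conj t).toMonoidHom} =
      (Nat.card {w : Ω // ∀ k ∈ K, k • w = w} : ℚ) / Nat.card Ω :=
  stmt_10_general G Ω K ω
end

section
/- There is an absolute constant c such that for every n ≥ 2, the number of unordered pairs of distinct commuting involutions in the symmetric group S_n (equivalently, the number of Klein four-subgroups counted with their generating pairs) satisfies i_{2×2}(S_n) < (n!)^{3/4} · e^{c·n}. -/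
/-!
Fix a point `a`. A pair of commuting involutions `x, y` of a finite set is determined by the
triple `(x a, y a, x (y a))`, which fixes it on the orbit `O = {a, x a, y a, x y a}`, together
with its restriction to the complement of `O`. Counting triples by `d = |O|` gives
`P(N) ≤ P(N-1) + 7N P(N-2) + 6N² P(N-3) + N³ P(N-4)` for the number `P(N)` of such pairs,
and by induction `P(N)⁴ ≤ (N!)³ 16^(4N)`. A Klein four-subgroup is determined by a pair of
generators, so there are at most `P(N)` of them.
-/

open Equiv Finset Nat

/-- The identity counts as an involution here. -/
def commutingInvolutionPairs (M : Type*) [Monoid M] : Set (M × M) :=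
  {p | p.1 * p.1 = 1 ∧ p.2 * p.2 = 1 ∧ Commute p.1 p.2}

lemma card_commutingInvolutionPairs_congr {M N : Type*} [Monoid M] [Monoid N] (e : M ≃* N) :
    Nat.card (commutingInvolutionPairs M) = Nat.card (commutingInvolutionPairs N) :=
  Nat.card_congr <| (e.toEquiv.prodCongr e.toEquiv).subtypeEquiv fun p => by
    simp [commutingInvolutionPairs, ← map_mul, Commute, SemiconjBy]

abbrev KleinFour : Type := Multiplicative (ZMod 2) × Multiplicative (ZMod 2)

namespace KleinFour

def a : KleinFour := (Multiplicative.ofAdd 1, 1)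
def b : KleinFour := (1, Multiplicative.ofAdd 1)

lemma eq_one_or_a_or_b_or_ab : ∀ k : KleinFour, k = 1 ∨ k = a ∨ k = b ∨ k = a * b := by decide

lemma hom_ext {M : Type*} [Monoid M] {f g : KleinFour →* M} (ha : f a = g a) (hb : f b = g b) :
    f = g :=
  MonoidHom.ext fun k => by
    obtain rfl | rfl | rfl | rfl := eq_one_or_a_or_b_or_ab k <;> simp [ha, hb]

lemma mem_commutingInvolutionPairs {M : Type*} [Monoid M] (f : KleinFour →* M) :
    (f a, f b) ∈ commutingInvolutionPairs M := by
  refine ⟨?_, ?_, ?_⟩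
  · rw [← map_mul]; simp [show a * a = 1 by decide]
  · rw [← map_mul]; simp [show b * b = 1 by decide]
  · exact (Commute.all a b).map f

end KleinFour

lemma card_kleinFour_subgroups_le (G : Type*) [Group G] [Finite G] :
    Nat.card {V : Subgroup G // Nonempty (V ≃* KleinFour)} ≤
      Nat.card (commutingInvolutionPairs G) := by
  let ι (V : {V : Subgroup G // Nonempty (V ≃* KleinFour)}) : KleinFour →* G :=
    V.1.subtype.comp V.2.some.symm.toMonoidHom
  have range_ι (V) : (ι V).range = V.1 := by
    rw [MonoidHom.range_comp, MonoidHom.range_eq_top.2 V.2.some.symm.surjective,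
      ← MonoidHom.range_eq_map, Subgroup.range_subtype]
  refine Nat.card_le_card_of_injective
    (fun V => ⟨(ι V KleinFour.a, ι V KleinFour.b), KleinFour.mem_commutingInvolutionPairs _⟩)
    fun V W h => ?_
  simp only [Subtype.mk.injEq, Prod.mk.injEq] at h
  rw [Subtype.ext_iff, ← range_ι V, ← range_ι W, KleinFour.hom_ext h.1 h.2]

noncomputable def numPairs (n : ℕ) : ℕ := Nat.card (commutingInvolutionPairs (Perm (Fin n)))

lemma card_commutingInvolutionPairs_perm (β : Type*) [Fintype β] :
    Nat.card (commutingInvolutionPairs (Perm β)) = numPairs (Fintype.card β) :=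
  card_commutingInvolutionPairs_congr (Fintype.equivFin β).permCongrHom

namespace Equiv.Perm

variable {α : Type*} {σ τ : Perm α}

lemma apply_apply_of_mul_self (h : σ * σ = 1) (b : α) : σ (σ b) = b := by
  simpa using DFunLike.congr_fun h b

lemma apply_apply_of_commute (h : Commute σ τ) (b : α) : σ (τ b) = τ (σ b) := by
  simpa using DFunLike.congr_fun h.eq b

lemma mem_iff_of_mul_self {s : Set α} (h : σ * σ = 1) (hs : Set.MapsTo σ s s) (b : α) :
    σ b ∈ s ↔ b ∈ s :=
  ⟨fun hb => apply_apply_of_mul_self h b ▸ hs hb, fun hb => hs hb⟩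

lemma subtypePerm_mem_commutingInvolutionPairs {p : Perm α × Perm α}
    (hp : p ∈ commutingInvolutionPairs (Perm α)) {q : α → Prop}
    (h₁ : ∀ b, q (p.1 b) ↔ q b) (h₂ : ∀ b, q (p.2 b) ↔ q b) :
    (p.1.subtypePerm h₁, p.2.subtypePerm h₂) ∈ commutingInvolutionPairs (Perm (Subtype q)) := by
  refine ⟨?_, ?_, ?_⟩ <;> ext b
  · simp [-subtypePerm_mul, apply_apply_of_mul_self hp.1]
  · simp [-subtypePerm_mul, apply_apply_of_mul_self hp.2.1]
  · simp [-subtypePerm_mul, apply_apply_of_commute hp.2.2]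

end Equiv.Perm

open Equiv.Perm

section Orbit

variable {α : Type*} [DecidableEq α]

def orbitTriple (a : α) (p : Perm α × Perm α) : α × α × α := (p.1 a, p.2 a, p.1 (p.2 a))

/-- For `t = orbitTriple a p` with `p` a pair of commuting involutions, this is the orbit of `a`
under the group generated by `p.1` and `p.2`. -/
def tripleOrbit (a : α) (t : α × α × α) : Finset α := {t.2.2, t.2.1, t.1, a}

variable {p q : Perm α × Perm α}

lemma mapsTo_tripleOrbit (hp : p ∈ commutingInvolutionPairs (Perm α)) {a : α} {t : α × α × α}
    (ht : orbitTriple a p = t) :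
    Set.MapsTo p.1 (tripleOrbit a t) (tripleOrbit a t) ∧
    Set.MapsTo p.2 (tripleOrbit a t) (tripleOrbit a t) := by
  subst ht
  have hx := apply_apply_of_mul_self hp.1
  have hy := apply_apply_of_mul_self hp.2.1
  have hxy := apply_apply_of_commute hp.2.2
  constructor <;> intro b hb <;>
    simp only [tripleOrbit, orbitTriple, coe_insert, coe_singleton, Set.mem_insert_iff,
      Set.mem_singleton_iff] at hb ⊢ <;>
    rcases hb with rfl | rfl | rfl | rfl <;> simp [hx, hy, hxy]

lemma eqOn_tripleOrbit (hp : p ∈ commutingInvolutionPairs (Perm α))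
    (hq : q ∈ commutingInvolutionPairs (Perm α)) {a : α} (h : orbitTriple a p = orbitTriple a q) :
    ∀ b ∈ tripleOrbit a (orbitTriple a p), p.1 b = q.1 b ∧ p.2 b = q.2 b := by
  have := apply_apply_of_mul_self hp.1
  have := apply_apply_of_mul_self hp.2.1
  have := apply_apply_of_commute hp.2.2
  have := apply_apply_of_mul_self hq.1
  have := apply_apply_of_mul_self hq.2.1
  have := apply_apply_of_commute hq.2.2
  simp only [orbitTriple, Prod.mk.injEq] at h
  intro b hb
  simp only [tripleOrbit, orbitTriple, mem_insert, mem_singleton] at hb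
  rcases hb with rfl | rfl | rfl | rfl <;> grind

def restrictCompl (a : α) (t : α × α × α)
    (p : {p : commutingInvolutionPairs (Perm α) // orbitTriple a p.1 = t}) :
    commutingInvolutionPairs (Perm {b // b ∉ tripleOrbit a t}) :=
  have hO := mapsTo_tripleOrbit p.1.2 p.2
  have h₁ := fun b => not_congr (mem_iff_of_mul_self p.1.2.1 hO.1 b)
  have h₂ := fun b => not_congr (mem_iff_of_mul_self p.1.2.2.1 hO.2 b)
  ⟨_, subtypePerm_mem_commutingInvolutionPairs p.1.2 h₁ h₂⟩

lemma restrictCompl_injective (a : α) (t : α × α × α) :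
    Function.Injective (restrictCompl a t) := by
  rintro ⟨⟨p, hp⟩, rfl⟩ ⟨⟨q, hq⟩, hpq⟩ h
  have hO := eqOn_tripleOrbit hp hq hpq.symm
  simp only [restrictCompl, Subtype.mk.injEq, Prod.mk.injEq] at h
  ext1; ext1
  refine Prod.ext (Equiv.ext fun b => ?_) (Equiv.ext fun b => ?_)
  all_goals
    by_cases hb : b ∈ tripleOrbit a (orbitTriple a p)
    · simp [hO b hb]
  · simpa using DFunLike.congr_fun h.1 ⟨b, hb⟩
  · simpa using DFunLike.congr_fun h.2 ⟨b, hb⟩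

lemma card_commutingInvolutionPairs_perm_le_sum [Fintype α] (a : α) :
    Nat.card (commutingInvolutionPairs (Perm α)) ≤
      ∑ t : α × α × α, numPairs (Fintype.card α - #(tripleOrbit a t)) := by
  rw [← Nat.card_congr (Equiv.sigmaFiberEquiv fun p : commutingInvolutionPairs (Perm α) =>
    orbitTriple a p.1), Nat.card_sigma]
  gcongr with t
  rw [← Fintype.card_coe (tripleOrbit a t), ← Fintype.card_subtype_compl,
    ← card_commutingInvolutionPairs_perm]
  exact Nat.card_le_card_of_injective _ (restrictCompl_injective a t)

end Orbit

section Counting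

variable {α : Type*} [Fintype α] [DecidableEq α]

def insertBound (N : ℕ) (g : ℕ → ℕ) (d : ℕ) : ℕ := d * g d + N * g (d + 1)

lemma sum_card_insert_le (g : ℕ → ℕ) (s : Finset α) :
    ∑ b, g #(insert b s) ≤ insertBound (Fintype.card α) g #s := by
  calc ∑ b, g #(insert b s) = ∑ b, if b ∈ s then g #s else g (#s + 1) := by
        refine sum_congr rfl fun b _ => ?_
        split_ifs with hb
        · rw [insert_eq_of_mem hb]
        · rw [card_insert_of_notMem hb]
    _ = #s * g #s + #sᶜ * g (#s + 1) := by
        rw [sum_ite, filter_mem_eq_inter, univ_inter, filter_not, filter_mem_eq_inter, univ_inter,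
          ← compl_eq_univ_sdiff]; simp
    _ ≤ insertBound (Fintype.card α) g #s := by
        unfold insertBound; gcongr; exact card_le_univ _

lemma sum_card_tripleOrbit_le (g : ℕ → ℕ) (a : α) :
    ∑ t : α × α × α, g #(tripleOrbit a t) ≤
      ∑ i : Fin 4, ![1, 7, 6, 1] i * Fintype.card α ^ (i : ℕ) * g (i + 1) := by
  set N := Fintype.card α
  calc ∑ t : α × α × α, g #(tripleOrbit a t)
      = ∑ t₁, ∑ t₂, ∑ t₃, g #(insert t₃ (insert t₂ (insert t₁ {a}))) := by
        simp only [Fintype.sum_prod_type]; rfl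
    _ ≤ ∑ t₁, ∑ t₂, insertBound N g #(insert t₂ (insert t₁ {a})) := by
        gcongr; exact sum_card_insert_le _ _
    _ ≤ ∑ t₁, insertBound N (insertBound N g) #(insert t₁ {a}) := by
        gcongr; exact sum_card_insert_le _ _
    _ ≤ insertBound N (insertBound N (insertBound N g)) #{a} := sum_card_insert_le _ _
    _ = ∑ i : Fin 4, ![1, 7, 6, 1] i * N ^ (i : ℕ) * g (i + 1) := by
        simp [insertBound, Fin.sum_univ_four]; ring

end Counting

/-- The `if` only guards the truncated subtraction: an orbit has at most `n + 1` points. -/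
lemma numPairs_succ_le (n : ℕ) :
    numPairs (n + 1) ≤ ∑ i : Fin 4, ![1, 7, 6, 1] i * (n + 1) ^ (i : ℕ) *
      if i + 1 ≤ n + 1 then numPairs (n + 1 - (i + 1)) else 0 := by
  have h := card_commutingInvolutionPairs_perm_le_sum (0 : Fin (n + 1))
  rw [card_commutingInvolutionPairs_perm, Fintype.card_fin] at h
  refine h.trans (le_of_eq_of_le (sum_congr rfl fun t _ => ?_)
    ((sum_card_tripleOrbit_le (fun d => if d ≤ n + 1 then numPairs (n + 1 - d) else 0) 0).trans_eq
      (by simp only [Fintype.card_fin])))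
  rw [if_pos]
  simpa using card_le_univ (tripleOrbit 0 t)

lemma pow_le_pow_mul_descFactorial {N d : ℕ} (h : d ≤ N) : N ^ d ≤ d ^ d * N.descFactorial d := by
  obtain ⟨m, rfl⟩ := Nat.exists_eq_add_of_le h
  calc (d + m) ^ d ≤ (d * (m + 1)) ^ d := by
        rcases d.eq_zero_or_pos with rfl | hd
        · simp
        · gcongr; nlinarith
    _ = d ^ d * (d + m + 1 - d) ^ d := by rw [mul_pow]; congr 3; omega
    _ ≤ d ^ d * (d + m).descFactorial d := by gcongr; exact pow_sub_le_descFactorial _ _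

lemma numPairs_zero_le : numPairs 0 ≤ 1 :=
  Finite.card_le_one_iff_subsingleton.2 inferInstance

lemma recurrence_term_pow_four_le {K N d c q : ℕ} (hd : d ≤ 3) (hN : d + 1 ≤ N)
    (hc : 4 ^ 4 * c ^ 4 * (d + 1) ^ (3 * (d + 1)) ≤ K ^ (d + 1))
    (hq : q ^ 4 ≤ (N - (d + 1))! ^ 3 * K ^ (N - (d + 1))) :
    (4 * (c * N ^ d * q)) ^ 4 ≤ N ! ^ 3 * K ^ N := by
  have hfac := factorial_mul_descFactorial hN
  have hK : K ^ N = K ^ (N - (d + 1)) * K ^ (d + 1) := by rw [← pow_add]; congr 1; omega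
  calc (4 * (c * N ^ d * q)) ^ 4 = 4 ^ 4 * c ^ 4 * N ^ (4 * d) * q ^ 4 := by ring
    _ ≤ 4 ^ 4 * c ^ 4 * (N ^ (d + 1)) ^ 3 * q ^ 4 := by
        have : N ^ (4 * d) ≤ (N ^ (d + 1)) ^ 3 := by
          rw [← pow_mul]; exact pow_le_pow_right₀ (by omega) (by omega)
        gcongr
    _ ≤ 4 ^ 4 * c ^ 4 * ((d + 1) ^ (d + 1) * N.descFactorial (d + 1)) ^ 3 * q ^ 4 := by
        gcongr; exact pow_le_pow_mul_descFactorial hN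
    _ = 4 ^ 4 * c ^ 4 * (d + 1) ^ (3 * (d + 1)) * N.descFactorial (d + 1) ^ 3 * q ^ 4 := by
        ring
    _ ≤ K ^ (d + 1) * N.descFactorial (d + 1) ^ 3 * ((N - (d + 1))! ^ 3 * K ^ (N - (d + 1))) := by
        gcongr
    _ = N ! ^ 3 * K ^ N := by rw [← hfac, hK]; ring

lemma sum_pow_le_of_forall_card_mul_pow_le {ι : Type*} {s : Finset ι} (hs : s.Nonempty)
    (f : ι → ℕ) {k B : ℕ} (h : ∀ i ∈ s, (#s * f i) ^ k ≤ B) : (∑ i ∈ s, f i) ^ k ≤ B := by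
  obtain ⟨i, hi, hmax⟩ := s.exists_max_image f hs
  calc (∑ i ∈ s, f i) ^ k ≤ (#s * f i) ^ k := by
        gcongr; simpa using sum_le_card_nsmul s f (f i) hmax
    _ ≤ B := h i hi

lemma numPairs_pow_four_le (n : ℕ) : numPairs n ^ 4 ≤ n ! ^ 3 * 65536 ^ n := by
  induction n using Nat.strong_induction_on with
  | _ n ih =>
    rcases n with _ | n
    · simpa using numPairs_zero_le
    refine (pow_le_pow_left₀ (zero_le _) (numPairs_succ_le n) 4).trans
      (sum_pow_le_of_forall_card_mul_pow_le univ_nonempty _ fun i _ => ?_)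
    rw [Finset.card_univ, Fintype.card_fin]
    split_ifs with hi
    · refine recurrence_term_pow_four_le (by omega) hi ?_ (ih _ (by omega))
      fin_cases i <;> norm_num
    · simp

lemma numPairs_le (n : ℕ) : (numPairs n : ℝ) ≤ (n ! : ℝ) ^ ((3 : ℝ) / 4) * 16 ^ n := by
  have hB : ((n ! : ℝ) ^ ((3 : ℝ) / 4) * 16 ^ n) ^ 4 = (n ! ^ 3 * 65536 ^ n : ℕ) := by
    rw [mul_pow, ← Real.rpow_natCast _ 4, ← Real.rpow_mul (by positivity), ← pow_mul,
      mul_comm n 4, pow_mul]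
    norm_num
  refine le_of_pow_le_pow_left₀ four_ne_zero (by positivity) ?_
  rw [hB]
  exact_mod_cast numPairs_pow_four_le n

lemma sixteen_pow_lt_exp {n : ℕ} (hn : n ≠ 0) : (16 : ℝ) ^ n < Real.exp (4 * n) := by
  have h : (16 : ℝ) < Real.exp 4 := by
    calc (16 : ℝ) = 2 ^ 4 := by norm_num
      _ < Real.exp 1 ^ 4 := by
        gcongr; linarith [Real.add_one_lt_exp (one_ne_zero (α := ℝ))]
      _ = Real.exp 4 := by rw [← Real.exp_nat_mul]; norm_num
  rw [mul_comm, Real.exp_nat_mul]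
  exact pow_lt_pow_left₀ h (by norm_num) hn

/-- i_{2×2}(S_n) < (n!)^{3/4}·e^{cn} for an absolute constant c. -/
theorem stmt_14 :
    ∃ c : ℝ, 0 < c ∧ ∀ n : ℕ, 2 ≤ n →
      (Nat.card {V : Subgroup (Equiv.Perm (Fin n)) //
          Nonempty (V ≃* Multiplicative (ZMod 2) × Multiplicative (ZMod 2))} : ℝ) <
        (n.factorial : ℝ) ^ ((3 : ℝ) / 4) * Real.exp (c * n) := by
  refine ⟨4, by norm_num, fun n hn => ?_⟩
  calc _ ≤ (numPairs n : ℝ) := by exact_mod_cast card_kleinFour_subgroups_le (Perm (Fin n))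
    _ ≤ (n ! : ℝ) ^ ((3 : ℝ) / 4) * 16 ^ n := numPairs_le n
    _ < _ := by gcongr; exact sixteen_pow_lt_exp (by omega)
end

section
/- For the symmetric group S_t, the number j₄(S_t) of elements of order dividing 4 satisfies j₄(S_t) < (t!)^{3/4} · e^{c·t} for some absolute constant c and all t ≥ 1. -/
/-!
Write `j(n) = numPowEqOne 4 n`. Classify `σ ∈ S_n` with `σ⁴ = 1` by the orbit of a chosen point
`a`, of size 1, 2 or 4. The orbit is determined by `(σ a, σ² a, σ³ a)`, and off the orbit `σ` is
again a permutation with `σ⁴ = 1`, so `j(n) ≤ j(n-1) + n j(n-2) + n³ j(n-4)`. Since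
`n ≤ (n(n-1))^{3/4}` and `n³ ≤ 64 (n(n-1)(n-2)(n-3))^{3/4}`, strong induction propagates
`j(n) ≤ (n!)^{3/4} 4ⁿ` through this recursion, and `4 < e³`.
-/

open Equiv Finset
open scoped Nat

theorem pow_four_apply_eq {α : Type*} {σ : Perm α} (h : σ ^ 4 = 1) (x : α) :
    σ (σ (σ (σ x))) = x := by
  simpa [pow_succ, Perm.mul_apply] using Perm.ext_iff.1 h x

noncomputable def numPowEqOne (m n : ℕ) : ℕ := Nat.card {σ : Perm (Fin n) // σ ^ m = 1}

section

variable {α : Type*} [Fintype α]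

theorem card_perm_pow_eq_one (m : ℕ) :
    Nat.card {σ : Perm α // σ ^ m = 1} = numPowEqOne m (Fintype.card α) :=
  Nat.card_congr <| (Fintype.equivFin α).permCongrHom.toEquiv.subtypeEquiv fun σ => by
    show _ ↔ (Fintype.equivFin α).permCongrHom σ ^ m = 1
    rw [← map_pow, MulEquiv.map_eq_one_iff]

variable [DecidableEq α]

theorem card_le_numPowEqOne_of_eqOn {m : ℕ} (s : Finset α) (P : Finset (Perm α))
    (hP : ∀ σ ∈ P, σ ^ m = 1 ∧ ∀ x, σ x ∈ s ↔ x ∈ s)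
    (heq : ∀ σ ∈ P, ∀ τ ∈ P, Set.EqOn σ τ s) :
    #P ≤ numPowEqOne m (Fintype.card α - #s) := by
  let restrict (σ : P) : {ρ : Perm {x // x ∉ s} // ρ ^ m = 1} :=
    ⟨σ.1.subtypePerm fun x => not_congr ((hP σ σ.2).2 x), by
      rw [Perm.subtypePerm_pow]; ext; simp [(hP σ σ.2).1]⟩
  have restrict_injective : Function.Injective restrict := by
    intro σ τ h
    ext x
    by_cases hx : x ∈ s
    · exact heq σ σ.2 τ τ.2 hx
    · simpa [restrict, Perm.ext_iff] using congrArg (fun ρ => (ρ.1 ⟨x, hx⟩ : α)) h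
  calc #P = Nat.card P := (Nat.card_eq_finsetCard P).symm
    _ ≤ _ := Nat.card_le_card_of_injective restrict restrict_injective
    _ = _ := by
      rw [card_perm_pow_eq_one, Fintype.card_subtype_compl, Fintype.card_coe]

theorem card_le_numPowEqOne_of_orbit (a b c d : α) (P : Finset (Perm α))
    (hP : ∀ σ ∈ P, σ ^ 4 = 1 ∧ σ a = b ∧ σ b = c ∧ σ c = d) :
    #P ≤ numPowEqOne 4 (Fintype.card α - #{a, b, c, d}) := by
  have hd : ∀ σ ∈ P, σ d = a := fun σ hσ => by
    obtain ⟨h4, rfl, rfl, rfl⟩ := hP σ hσ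
    exact pow_four_apply_eq h4 a
  refine card_le_numPowEqOne_of_eqOn _ P (fun σ hσ => ⟨(hP σ hσ).1, fun x => ?_⟩) ?_
  · obtain ⟨-, ha, hb, hc⟩ := hP σ hσ
    have hd := hd σ hσ
    simp only [mem_insert, mem_singleton]
    grind [σ.injective.eq_iff]
  · intro σ hσ τ hτ x hx
    obtain ⟨-, ha, hb, hc⟩ := hP σ hσ
    obtain ⟨-, ha', hb', hc'⟩ := hP τ hτ
    simp only [coe_insert, coe_singleton, Set.mem_insert_iff, Set.mem_singleton_iff] at hx
    rcases hx with rfl | rfl | rfl | rfl <;> grind [hd σ hσ, hd τ hτ]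

theorem card_pow_four_eq_one_fixing_le (a : α) :
    #{σ : Perm α | σ ^ 4 = 1 ∧ σ a = a} ≤ numPowEqOne 4 (Fintype.card α - 1) := by
  simpa using card_le_numPowEqOne_of_orbit a a a a _ fun σ hσ => by
    obtain ⟨h4, ha⟩ := (mem_filter.1 hσ).2
    simp [h4, ha]

theorem card_pow_four_eq_one_swapping_le (a : α) :
    #{σ : Perm α | σ ^ 4 = 1 ∧ σ a ≠ a ∧ σ (σ a) = a} ≤
      Fintype.card α * numPowEqOne 4 (Fintype.card α - 2) := by
  set P : Finset (Perm α) := {σ | σ ^ 4 = 1 ∧ σ a ≠ a ∧ σ (σ a) = a}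
  calc #P ≤ numPowEqOne 4 (Fintype.card α - 2) * #(P.image (· a)) := by
        refine card_le_mul_card_image _ _ fun b hb => ?_
        obtain ⟨σ, hσ, rfl⟩ := mem_image.1 hb
        have h2 : #{a, σ a, a, σ a} = 2 := by
          simp [card_insert_of_notMem, Ne.symm (mem_filter.1 hσ).2.2.1]
        refine (card_le_numPowEqOne_of_orbit a (σ a) a (σ a) _ fun τ hτ => ?_).trans_eq
          (by rw [h2])
        simp only [P, mem_filter, mem_univ, true_and] at hτ
        obtain ⟨⟨hτ, -, hτa⟩, hτσ⟩ := hτ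
        exact ⟨hτ, hτσ, hτσ ▸ hτa, hτσ⟩
    _ ≤ numPowEqOne 4 (Fintype.card α - 2) * Fintype.card α := by
        gcongr
        exact card_le_univ _
    _ = _ := mul_comm _ _

theorem card_pow_four_eq_one_fourCycle_le (a : α) :
    #{σ : Perm α | σ ^ 4 = 1 ∧ σ a ≠ a ∧ σ (σ a) ≠ a} ≤
      Fintype.card α ^ 3 * numPowEqOne 4 (Fintype.card α - 4) := by
  set P : Finset (Perm α) := {σ | σ ^ 4 = 1 ∧ σ a ≠ a ∧ σ (σ a) ≠ a}
  let orbit (σ : Perm α) : α × α × α := (σ a, σ (σ a), σ (σ (σ a)))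
  calc #P ≤ numPowEqOne 4 (Fintype.card α - 4) * #(P.image orbit) := by
        refine card_le_mul_card_image _ _ fun b hb => ?_
        obtain ⟨σ, hσ, rfl⟩ := mem_image.1 hb
        obtain ⟨h4, h1, h2⟩ := (mem_filter.1 hσ).2
        have hcard : #{a, σ a, σ (σ a), σ (σ (σ a))} = 4 := by
          have h3 := pow_four_apply_eq h4 a
          grind [card_insert_of_notMem, σ.injective.eq_iff]
        refine (card_le_numPowEqOne_of_orbit a (σ a) (σ (σ a)) (σ (σ (σ a))) _
          fun τ hτ => ?_).trans_eq (by rw [hcard])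
        simp only [P, orbit, mem_filter, mem_univ, true_and, Prod.mk.injEq] at hτ
        obtain ⟨⟨hτ, -⟩, hτ1, hτ2, hτ3⟩ := hτ
        exact ⟨hτ, hτ1, hτ1 ▸ hτ2, (congrArg τ hτ2).symm.trans hτ3⟩
    _ ≤ numPowEqOne 4 (Fintype.card α - 4) * Fintype.card α ^ 3 := by
        gcongr
        exact (card_le_univ _).trans_eq (by simp; ring)
    _ = _ := mul_comm _ _

theorem card_perm_pow_four_eq_one_le (a : α) :
    Nat.card {σ : Perm α // σ ^ 4 = 1} ≤
      numPowEqOne 4 (Fintype.card α - 1) + Fintype.card α * numPowEqOne 4 (Fintype.card α - 2) +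
        Fintype.card α ^ 3 * numPowEqOne 4 (Fintype.card α - 4) := by
  calc Nat.card {σ : Perm α // σ ^ 4 = 1} = #{σ : Perm α | σ ^ 4 = 1} := by
        rw [Nat.card_eq_fintype_card, Fintype.card_subtype]
    _ = #{σ : Perm α | σ ^ 4 = 1 ∧ σ a = a} +
          #{σ : Perm α | σ ^ 4 = 1 ∧ σ a ≠ a ∧ σ (σ a) = a} +
          #{σ : Perm α | σ ^ 4 = 1 ∧ σ a ≠ a ∧ σ (σ a) ≠ a} := by
      rw [← card_filter_add_card_filter_not (fun σ => σ a = a),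
        ← card_filter_add_card_filter_not (s := {σ ∈ {σ : Perm α | σ ^ 4 = 1} | ¬σ a = a})
          (fun σ => σ (σ a) = a), add_assoc]
      simp only [filter_filter, and_assoc]
    _ ≤ _ := by
      gcongr
      exacts [card_pow_four_eq_one_fixing_le a, card_pow_four_eq_one_swapping_le a,
        card_pow_four_eq_one_fourCycle_le a]

end

theorem numPowEqOne_le_factorial (m n : ℕ) : numPowEqOne m n ≤ n ! := by
  simpa [numPowEqOne, Nat.card_eq_fintype_card, Fintype.card_perm] using
    Nat.card_le_card_of_injective _
      (Subtype.val_injective (p := fun σ : Perm (Fin n) => σ ^ m = 1))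

theorem numPowEqOne_four_add_four_le (k : ℕ) :
    numPowEqOne 4 (k + 4) ≤
      numPowEqOne 4 (k + 3) + (k + 4) * numPowEqOne 4 (k + 2) + (k + 4) ^ 3 * numPowEqOne 4 k := by
  have h := card_perm_pow_four_eq_one_le (0 : Fin (k + 4))
  rwa [Fintype.card_fin] at h

theorem mul_rpow_three_div_four_le {x a b c : ℝ} (ha : 0 ≤ a) (hb : 0 ≤ b)
    (hc : 0 ≤ c) (h : x ^ 4 * a ^ 3 ≤ c ^ 4 * b ^ 3) :
    x * a ^ (3 / 4 : ℝ) ≤ c * b ^ (3 / 4 : ℝ) := by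
  have pow_four : ∀ y : ℝ, 0 ≤ y → (y ^ (3 / 4 : ℝ)) ^ 4 = y ^ 3 := fun y hy => by
    rw [← Real.rpow_natCast, ← Real.rpow_mul hy]; norm_num
  refine le_of_pow_le_pow_left₀ (n := 4) (by norm_num) (by positivity) ?_
  rwa [mul_pow, mul_pow, pow_four a ha, pow_four b hb]

theorem add_four_pow_four_mul_factorial_le (k : ℕ) :
    (k + 4) ^ 4 * (k + 2)! ^ 3 ≤ (k + 4)! ^ 3 := by
  have hk : k + 4 ≤ (k + 3) ^ 3 := by ring_nf; omega
  calc (k + 4) ^ 4 * (k + 2)! ^ 3 = (k + 4) ^ 3 * (k + 4) * (k + 2)! ^ 3 := by ring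
    _ ≤ (k + 4) ^ 3 * (k + 3) ^ 3 * (k + 2)! ^ 3 := by gcongr
    _ = (k + 4)! ^ 3 := by simp [Nat.factorial_succ]; ring

theorem add_four_pow_twelve_mul_factorial_le (k : ℕ) :
    (k + 4) ^ 12 * k ! ^ 3 ≤ 64 ^ 4 * (k + 4)! ^ 3 := by
  have hk : (k + 4) ^ 4 ≤ 4 * (k + 1) * (4 * (k + 2)) * (4 * (k + 3)) * (4 * (k + 4)) := by
    rw [pow_succ, pow_succ, pow_succ, pow_one]; gcongr <;> omega
  calc (k + 4) ^ 12 * k ! ^ 3 = ((k + 4) ^ 4) ^ 3 * k ! ^ 3 := by ring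
    _ ≤ (4 * (k + 1) * (4 * (k + 2)) * (4 * (k + 3)) * (4 * (k + 4))) ^ 3 * k ! ^ 3 := by gcongr
    _ = 64 ^ 4 * (k + 4)! ^ 3 := by simp [Nat.factorial_succ]; ring

theorem factorial_rpow_mul_four_pow_recursion (k : ℕ) :
    ((k + 3)! : ℝ) ^ (3 / 4 : ℝ) * 4 ^ (k + 3) +
        (k + 4) * (((k + 2)! : ℝ) ^ (3 / 4 : ℝ) * 4 ^ (k + 2)) +
        (k + 4) ^ 3 * ((k ! : ℝ) ^ (3 / 4 : ℝ) * 4 ^ k) ≤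
      ((k + 4)! : ℝ) ^ (3 / 4 : ℝ) * 4 ^ (k + 4) := by
  have fixed : ((k + 3)! : ℝ) ^ (3 / 4 : ℝ) ≤ ((k + 4)! : ℝ) ^ (3 / 4 : ℝ) := by
    gcongr
    norm_num
  have transposition := mul_rpow_three_div_four_le (x := (k + 4 : ℝ)) (c := 1)
    (a := ((k + 2)! : ℝ)) (b := ((k + 4)! : ℝ)) (by positivity) (by positivity) (by norm_num)
    (by rw [one_pow, one_mul]; exact_mod_cast add_four_pow_four_mul_factorial_le k)
  have fourCycle := mul_rpow_three_div_four_le (x := ((k + 4 : ℝ) ^ 3)) (c := 64)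
    (a := (k ! : ℝ)) (b := ((k + 4)! : ℝ)) (by positivity) (by positivity) (by norm_num)
    (by rw [← pow_mul]; exact_mod_cast add_four_pow_twelve_mul_factorial_le k)
  rw [one_mul] at transposition
  have hF : (0 : ℝ) ≤ ((k + 4)! : ℝ) ^ (3 / 4 : ℝ) * 4 ^ k := by positivity
  calc _ = (((k + 3)! : ℝ) ^ (3 / 4 : ℝ) * 64 +
          (k + 4) * ((k + 2)! : ℝ) ^ (3 / 4 : ℝ) * 16 +
          (k + 4) ^ 3 * (k ! : ℝ) ^ (3 / 4 : ℝ)) * 4 ^ k := by ring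
    _ ≤ (((k + 4)! : ℝ) ^ (3 / 4 : ℝ) * 64 + ((k + 4)! : ℝ) ^ (3 / 4 : ℝ) * 16 +
          64 * ((k + 4)! : ℝ) ^ (3 / 4 : ℝ)) * 4 ^ k := by gcongr
    _ ≤ _ := by rw [pow_add]; nlinarith

theorem numPowEqOne_four_le (t : ℕ) :
    (numPowEqOne 4 t : ℝ) ≤ (t ! : ℝ) ^ (3 / 4 : ℝ) * 4 ^ t := by
  induction t using Nat.strong_induction_on with
  | _ t ih =>
    rcases lt_or_ge t 4 with ht | ht
    · have h : t ! ≤ 4 ^ t := by interval_cases t <;> decide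
      calc (numPowEqOne 4 t : ℝ) ≤ t ! := by exact_mod_cast numPowEqOne_le_factorial 4 t
        _ ≤ 4 ^ t := by exact_mod_cast h
        _ ≤ _ := le_mul_of_one_le_left (by positivity)
          (Real.one_le_rpow (by exact_mod_cast t.factorial_pos) (by norm_num))
    obtain ⟨k, rfl⟩ := Nat.exists_eq_add_of_le' ht
    calc (numPowEqOne 4 (k + 4) : ℝ)
        ≤ numPowEqOne 4 (k + 3) + (k + 4) * numPowEqOne 4 (k + 2) +
            (k + 4) ^ 3 * numPowEqOne 4 k := by
          exact_mod_cast numPowEqOne_four_add_four_le k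
      _ ≤ ((k + 3)! : ℝ) ^ (3 / 4 : ℝ) * 4 ^ (k + 3) +
            (k + 4) * (((k + 2)! : ℝ) ^ (3 / 4 : ℝ) * 4 ^ (k + 2)) +
            (k + 4) ^ 3 * ((k ! : ℝ) ^ (3 / 4 : ℝ) * 4 ^ k) := by
          gcongr <;> exact ih _ (by omega)
      _ ≤ _ := factorial_rpow_mul_four_pow_recursion k

/-- j₄(S_t) < (t!)^{3/4}·e^{ct} for an absolute constant c. -/
theorem stmt_15 :
    ∃ c : ℝ, 0 < c ∧ ∀ t : ℕ, 1 ≤ t →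
      (Nat.card {σ : Equiv.Perm (Fin t) // σ ^ 4 = 1} : ℝ) <
        (t.factorial : ℝ) ^ ((3 : ℝ) / 4) * Real.exp (c * t) := by
  refine ⟨3, by norm_num, fun t ht => ?_⟩
  have four_pow_lt : (4 : ℝ) ^ t < Real.exp (3 * t) := by
    rw [mul_comm, Real.exp_nat_mul]
    exact pow_lt_pow_left₀ (by linarith [Real.add_one_lt_exp (by norm_num : (3 : ℝ) ≠ 0)])
      (by norm_num) (by omega)
  calc (Nat.card {σ : Equiv.Perm (Fin t) // σ ^ 4 = 1} : ℝ)
      ≤ (t ! : ℝ) ^ (3 / 4 : ℝ) * 4 ^ t := numPowEqOne_four_le t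
    _ < _ := by gcongr
end
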